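/- arXiv:1705.01936 — 3 statements merged into one kernel-verified Lean document; each statement's English description precedes it below -/
import Mathlib

section
/- Under the unassuming condition, the confident-counts estimator satisfies ρ̂₁^{conf} = ρ₁ + (1-ρ₁-ρ₀)·|ΔN₁|/(|P| - |ΔP₁| + |ΔN₁|), where ΔP₁ = {x∈P : g(x) < LB} and ΔN₁ = {x∈N : g(x) ≥ LB}; consequently ρ̂₁^{conf} ≥ ρ₁, with equality iff |ΔN₁| = 0. -/
/-!
Split every event inside `{LB ≤ g}` along the partition `P ∪ N`. Writing `a = |P ∩ {LB ≤ g}|` and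
`b = |ΔN₁|`, the noise model gives `|Ñ_{y=1}| = ρ₁ a + (1 - ρ₀) b` while
`|Ñ_{y=1}| + |P̃_{y=1}| = a + b = |P| - |ΔP₁| + |ΔN₁|`, so
`ρ̂₁^{conf} = (ρ₁ a + (1 - ρ₀) b) / (a + b) = ρ₁ + (1 - ρ₁ - ρ₀) b / (a + b)`,
and the excess over `ρ₁` is a positive multiple of `b`.
-/

open MeasureTheory Set

noncomputable def Pr {Ω : Type*} [MeasurableSpace Ω] (μ : Measure Ω) (A : Set Ω) : ℝ :=
  (μ A).toReal

section Pr

variable {Ω : Type*} [MeasurableSpace Ω] {μ : Measure Ω}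

lemma Pr_nonneg (A : Set Ω) : 0 ≤ Pr μ A := ENNReal.toReal_nonneg

lemma Pr_compl_inter_add_inter [IsFiniteMeasure μ] {S : Set Ω} (hS : MeasurableSet S)
    (A : Set Ω) : Pr μ (Sᶜ ∩ A) + Pr μ (S ∩ A) = Pr μ A := by
  unfold Pr
  rw [← ENNReal.toReal_add (measure_ne_top μ _) (measure_ne_top μ _), inter_comm Sᶜ,
    inter_comm S, ← sdiff_eq, add_comm, measure_inter_add_sdiff A hS]

end Pr

lemma mix_div_eq_add_mul_div (ρ₁ ρ₀ a b : ℝ) (hab : a + b ≠ 0) :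
    (ρ₁ * a + (1 - ρ₀) * b) / (a + b) = ρ₁ + (1 - ρ₁ - ρ₀) * b / (a + b) := by
  field_simp
  ring

theorem stmt14_general {Ω : Type*} [MeasurableSpace Ω] (μ : Measure Ω) [IsProbabilityMeasure μ]
    (P N S : Set Ω) (hN : MeasurableSet N) (hS : MeasurableSet S)
    (hdisj : P ∩ N = ∅) (hcover : P ∪ N = Set.univ)
    (g : Ω → ℝ) (hg : Measurable g) (LB ρ₁ ρ₀ : ℝ)
    (hsum : ρ₁ + ρ₀ < 1)
    -- class-conditional noise, independent of x given the class (applied to g-events):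
    (hnoiseP : ∀ B : Set ℝ, MeasurableSet B →
      Pr μ (Sᶜ ∩ (P ∩ g ⁻¹' B)) = ρ₁ * Pr μ (P ∩ g ⁻¹' B))
    (hnoiseN : ∀ B : Set ℝ, MeasurableSet B →
      Pr μ (Sᶜ ∩ (N ∩ g ⁻¹' B)) = (1 - ρ₀) * Pr μ (N ∩ g ⁻¹' B))
    (hden : 0 < Pr μ P - Pr μ (P ∩ {x | g x < LB}) + Pr μ (N ∩ {x | LB ≤ g x})) :
    Pr μ (Sᶜ ∩ {x | LB ≤ g x}) / (Pr μ (Sᶜ ∩ {x | LB ≤ g x}) + Pr μ (S ∩ {x | LB ≤ g x})) =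
      ρ₁ + (1 - ρ₁ - ρ₀) * Pr μ (N ∩ {x | LB ≤ g x}) /
        (Pr μ P - Pr μ (P ∩ {x | g x < LB}) + Pr μ (N ∩ {x | LB ≤ g x})) ∧
    ρ₁ ≤ Pr μ (Sᶜ ∩ {x | LB ≤ g x}) /
        (Pr μ (Sᶜ ∩ {x | LB ≤ g x}) + Pr μ (S ∩ {x | LB ≤ g x})) ∧
    (Pr μ (Sᶜ ∩ {x | LB ≤ g x}) / (Pr μ (Sᶜ ∩ {x | LB ≤ g x}) + Pr μ (S ∩ {x | LB ≤ g x}))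
        = ρ₁ ↔ Pr μ (N ∩ {x | LB ≤ g x}) = 0) := by
  set G := {x | LB ≤ g x}
  have hG : MeasurableSet G := hg measurableSet_Ici
  have hNc : Nᶜ = P := (IsCompl.of_eq hdisj hcover).symm.compl_eq
  have hGc : Gᶜ = {x | g x < LB} := by ext; simp [G]
  have hP_sub : Pr μ P - Pr μ (P ∩ {x | g x < LB}) = Pr μ (P ∩ G) := by
    rw [← Pr_compl_inter_add_inter hG P, hGc, inter_comm P, inter_comm P]
    ring
  have hnoisy : Pr μ (Sᶜ ∩ G) = ρ₁ * Pr μ (P ∩ G) + (1 - ρ₀) * Pr μ (N ∩ G) := by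
    rw [← Pr_compl_inter_add_inter hN, hNc, inter_left_comm, inter_left_comm N]
    exact congr_arg₂ (· + ·) (hnoiseP (Ici LB) measurableSet_Ici)
      (hnoiseN (Ici LB) measurableSet_Ici)
  have hconf : Pr μ (Sᶜ ∩ G) + Pr μ (S ∩ G) = Pr μ (P ∩ G) + Pr μ (N ∩ G) := by
    rw [Pr_compl_inter_add_inter hS, ← Pr_compl_inter_add_inter hN, hNc]
  rw [hP_sub] at hden ⊢
  rw [hconf, hnoisy, mix_div_eq_add_mul_div _ _ _ _ hden.ne']
  have hgap : 0 < 1 - ρ₁ - ρ₀ := by linarith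
  refine ⟨rfl, le_add_of_nonneg_right ?_, ?_⟩
  · exact div_nonneg (mul_nonneg hgap.le (Pr_nonneg _)) hden.le
  · simp [hgap.ne', hden.ne']

/-- Lemma 3, ρ̂₁ part: Under the unassuming condition, with class-conditional
noise independent of any g-measurable event,
ρ̂₁^{conf} = ρ₁ + (1-ρ₁-ρ₀)·|ΔN₁|/(|P| - |ΔP₁| + |ΔN₁|), where
ΔP₁ = P ∩ {g < LB}, ΔN₁ = N ∩ {g ≥ LB}; hence ρ̂₁^{conf} ≥ ρ₁ with equality iff |ΔN₁| = 0. -/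
theorem stmt14 {Ω : Type*} [MeasurableSpace Ω] (μ : Measure Ω) [IsProbabilityMeasure μ]
    (P N S : Set Ω) (hP : MeasurableSet P) (hN : MeasurableSet N) (hS : MeasurableSet S)
    (hdisj : P ∩ N = ∅) (hcover : P ∪ N = Set.univ)
    (g : Ω → ℝ) (hg : Measurable g) (LB ρ₁ ρ₀ : ℝ)
    (hρ₁0 : 0 ≤ ρ₁) (hρ₀0 : 0 ≤ ρ₀) (hsum : ρ₁ + ρ₀ < 1)
    -- class-conditional noise, independent of x given the class (applied to g-events):
    (hnoiseP : ∀ B : Set ℝ, MeasurableSet B →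
      Pr μ (Sᶜ ∩ (P ∩ g ⁻¹' B)) = ρ₁ * Pr μ (P ∩ g ⁻¹' B))
    (hnoiseN : ∀ B : Set ℝ, MeasurableSet B →
      Pr μ (Sᶜ ∩ (N ∩ g ⁻¹' B)) = (1 - ρ₀) * Pr μ (N ∩ g ⁻¹' B))
    (hden : 0 < Pr μ P - Pr μ (P ∩ {x | g x < LB}) + Pr μ (N ∩ {x | LB ≤ g x})) :
    Pr μ (Sᶜ ∩ {x | LB ≤ g x}) / (Pr μ (Sᶜ ∩ {x | LB ≤ g x}) + Pr μ (S ∩ {x | LB ≤ g x})) =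
      ρ₁ + (1 - ρ₁ - ρ₀) * Pr μ (N ∩ {x | LB ≤ g x}) /
        (Pr μ P - Pr μ (P ∩ {x | g x < LB}) + Pr μ (N ∩ {x | LB ≤ g x})) ∧
    ρ₁ ≤ Pr μ (Sᶜ ∩ {x | LB ≤ g x}) /
        (Pr μ (Sᶜ ∩ {x | LB ≤ g x}) + Pr μ (S ∩ {x | LB ≤ g x})) ∧
    (Pr μ (Sᶜ ∩ {x | LB ≤ g x}) / (Pr μ (Sᶜ ∩ {x | LB ≤ g x}) + Pr μ (S ∩ {x | LB ≤ g x}))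
        = ρ₁ ↔ Pr μ (N ∩ {x | LB ≤ g x}) = 0) :=
  stmt14_general μ P N S hN hS hdisj hcover g hg LB ρ₁ ρ₀ hsum hnoiseP hnoiseN hden
end

section
/- If g range-separates P and N (there exists z with g(x₁) > z > g(x₀) for all x₁ ∈ P, x₀ ∈ N), and the pruning thresholds remove exactly π₁|P̃| lowest-g examples from P̃ and π₀|Ñ| highest-g examples from Ñ, where π₁|P̃| = ρ₀|N| and π₀|Ñ| = ρ₁|P|, then the pruned sets satisfy P̃_conf = {x ∈ P : s=1} and Ñ_conf = {x ∈ N : s=0}. -/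
open MeasureTheory Set

/-!
Since `g` separates `P` from `N = Pᶜ`, every lower level set `{g < k}` is comparable with `N`:
it lies inside `N` when `k ≤ z` and contains `N` when `z < k`. Within `S`, the pruned-away set
`S ∩ {g < k₁}` and the noisy set `N ∩ S` are therefore nested sets of the same finite measure,
hence equal up to a null set, and so are their complements `S ∩ {k₁ ≤ g}` and `P ∩ S` in `S`.
The statement for `Sᶜ` is the same argument applied to `-g`.
-/

section

variable {Ω : Type*} {P N T : Set Ω} {g : Ω → ℝ} {z : ℝ}

lemma setOf_lt_subset_or_subset (hPN : IsCompl P N) (hsepP : ∀ x ∈ P, z < g x)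
    (hsepN : ∀ x ∈ N, g x < z) (k : ℝ) : {x | g x < k} ⊆ N ∨ N ⊆ {x | g x < k} := by
  rcases le_or_gt k z with hkz | hzk
  · refine .inl fun x hx => ?_
    rw [← hPN.compl_eq]
    exact fun hxP => (hx.trans_le hkz).not_gt (hsepP x hxP)
  · exact .inr fun x hxN => (hsepN x hxN).trans hzk

variable [MeasurableSpace Ω] {μ : Measure Ω}

lemma Pr_eq_Pr_iff [IsFiniteMeasure μ] {A B : Set Ω} : Pr μ A = Pr μ B ↔ μ A = μ B :=
  ENNReal.toReal_eq_toReal_iff' (measure_ne_top μ A) (measure_ne_top μ B)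

lemma ae_eq_of_subset_or_subset [IsFiniteMeasure μ] {s t : Set Ω} (hst : s ⊆ t ∨ t ⊆ s)
    (h : μ s = μ t) (hs : NullMeasurableSet s μ) (ht : NullMeasurableSet t μ) : s =ᵐ[μ] t := by
  rcases hst with hst | hts
  · exact ae_eq_of_subset_of_measure_ge hst h.ge hs (measure_ne_top μ t)
  · exact (ae_eq_of_subset_of_measure_ge hts h.le ht (measure_ne_top μ s)).symm

lemma inter_setOf_le_ae_eq_inter [IsFiniteMeasure μ] (hN : MeasurableSet N)
    (hT : MeasurableSet T) (hg : Measurable g) (hPN : IsCompl P N)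
    (hsepP : ∀ x ∈ P, z < g x) (hsepN : ∀ x ∈ N, g x < z) {k : ℝ}
    (hk : μ (T ∩ {x | g x < k}) = μ (N ∩ T)) :
    (T ∩ {x | k ≤ g x} : Set Ω) =ᵐ[μ] (P ∩ T : Set Ω) := by
  have hpruned : (T ∩ {x | g x < k} : Set Ω) =ᵐ[μ] (T ∩ N : Set Ω) := by
    rw [inter_comm N] at hk
    refine ae_eq_of_subset_or_subset ?_ hk
      (hT.inter (measurableSet_lt hg measurable_const)).nullMeasurableSet
      (hT.inter hN).nullMeasurableSet
    exact (setOf_lt_subset_or_subset hPN hsepP hsepN k).imp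
      (inter_subset_inter_right T) (inter_subset_inter_right T)
  have hkept : T ∩ {x | k ≤ g x} = T \ (T ∩ {x | g x < k}) := by
    ext x
    simp [sdiff_self_inter]
  have hclean : P ∩ T = T \ (T ∩ N) := by
    rw [sdiff_self_inter, sdiff_eq, hPN.symm.compl_eq, inter_comm]
  rw [hkept, hclean]
  exact (Filter.EventuallyEq.refl _ T).diff hpruned

end

theorem stmt18_general {Ω : Type*} [MeasurableSpace Ω] (μ : Measure Ω) [IsProbabilityMeasure μ]
    (P N S : Set Ω)
    (hP : MeasurableSet P) (hN : MeasurableSet N) (hS : MeasurableSet S)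
    (hdisj : P ∩ N = ∅) (hcover : P ∪ N = Set.univ)
    (g : Ω → ℝ) (hg : Measurable g) (z : ℝ)
    (hsepP : ∀ x ∈ P, z < g x) (hsepN : ∀ x ∈ N, g x < z)
    (ρ₁ ρ₀ k₁ k₀ : ℝ)
    (hρ₁ : Pr μ (P ∩ Sᶜ) = ρ₁ * Pr μ P)
    (hρ₀ : Pr μ (N ∩ S) = ρ₀ * Pr μ N)
    -- the prune cutoffs remove exactly π₁|P̃| = ρ₀|N| and π₀|Ñ| = ρ₁|P| of mass:
    (hk₁ : Pr μ (S ∩ {x | g x < k₁}) = ρ₀ * Pr μ N)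
    (hk₀ : Pr μ (Sᶜ ∩ {x | k₀ < g x}) = ρ₁ * Pr μ P) :
    μ (symmDiff (S ∩ {x | k₁ ≤ g x}) (P ∩ S)) = 0 ∧
    μ (symmDiff (Sᶜ ∩ {x | g x ≤ k₀}) (N ∩ Sᶜ)) = 0 := by
  have hPN : IsCompl P N :=
    ⟨disjoint_iff_inter_eq_empty.mpr hdisj, codisjoint_iff.mpr hcover⟩
  have hS₁ : μ (S ∩ {x | g x < k₁}) = μ (N ∩ S) := Pr_eq_Pr_iff.mp (hk₁.trans hρ₀.symm)
  have hS₀ : μ (Sᶜ ∩ {x | -g x < -k₀}) = μ (P ∩ Sᶜ) := by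
    simpa only [neg_lt_neg_iff] using Pr_eq_Pr_iff.mp (hk₀.trans hρ₁.symm)
  refine ⟨measure_symmDiff_eq_zero_iff.mpr ?_, measure_symmDiff_eq_zero_iff.mpr ?_⟩
  · exact inter_setOf_le_ae_eq_inter hN hS hg hPN hsepP hsepN hS₁
  · simpa only [Pi.neg_apply, neg_le_neg_iff] using
      inter_setOf_le_ae_eq_inter (g := -g) (z := -z) hP hS.compl hg.neg hPN.symm
        (fun x hx => neg_lt_neg (hsepN x hx)) (fun x hx => neg_lt_neg (hsepP x hx)) hS₀

/-- If g range-separates P and N, and the pruning cutoffs k₁, k₀ remove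
exactly mass π₁|P̃| = ρ₀|N| of lowest-g examples from P̃ = {s=1} and
π₀|Ñ| = ρ₁|P| of highest-g examples from Ñ = {s=0}, then the pruned sets equal (up to
a μ-null set) P̃_conf = P ∩ {s=1} and Ñ_conf = N ∩ {s=0}. -/
theorem stmt18 {Ω : Type*} [MeasurableSpace Ω] (μ : Measure Ω) [IsProbabilityMeasure μ]
    (P N S : Set Ω)
    (hP : MeasurableSet P) (hN : MeasurableSet N) (hS : MeasurableSet S)
    (hdisj : P ∩ N = ∅) (hcover : P ∪ N = Set.univ)
    (g : Ω → ℝ) (hg : Measurable g) (z : ℝ)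
    (hsepP : ∀ x ∈ P, z < g x) (hsepN : ∀ x ∈ N, g x < z)
    (ρ₁ ρ₀ k₁ k₀ : ℝ) (hρ₁0 : 0 ≤ ρ₁) (hρ₀0 : 0 ≤ ρ₀) (hsum : ρ₁ + ρ₀ < 1)
    (hρ₁ : Pr μ (P ∩ Sᶜ) = ρ₁ * Pr μ P)
    (hρ₀ : Pr μ (N ∩ S) = ρ₀ * Pr μ N)
    -- the prune cutoffs remove exactly π₁|P̃| = ρ₀|N| and π₀|Ñ| = ρ₁|P| of mass:
    (hk₁ : Pr μ (S ∩ {x | g x < k₁}) = ρ₀ * Pr μ N)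
    (hk₀ : Pr μ (Sᶜ ∩ {x | k₀ < g x}) = ρ₁ * Pr μ P) :
    μ (symmDiff (S ∩ {x | k₁ ≤ g x}) (P ∩ S)) = 0 ∧
    μ (symmDiff (Sᶜ ∩ {x | g x ≤ k₀}) (N ∩ Sᶜ)) = 0 :=
  stmt18_general μ P N S hP hN hS hdisj hcover g hg z hsepP hsepN ρ₁ ρ₀ k₁ k₀ hρ₁ hρ₀ hk₁ hk₀
end

section
/- If g range-separates P and N and the noise rate estimates are exact (ρ̂ᵢ = ρᵢ), then for any classifier f_θ and any bounded loss ℓ, the expected Rank-Pruning risk on the corrupted distribution equals the expected risk on the clean distribution: E_{(x,s)∼D_ρ}[ (1/(1-ρ₁))·ℓ(f_θ(x),s)·1[x∈P̃_conf] + (1/(1-ρ₀))·ℓ(f_θ(x),s)·1[x∈Ñ_conf] ] = E_{(x,y)∼D}[ℓ(f_θ(x),y)]. -/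
open MeasureTheory Set

lemma symmDiff_null_of_pr_eq {Ω : Type*} [MeasurableSpace Ω] (μ : Measure Ω) [IsFiniteMeasure μ]
    {A B : Set Ω} (hA : MeasurableSet A) (hB : MeasurableSet B)
    (h : Pr μ A = Pr μ B) (hsub : A ⊆ B ∨ B ⊆ A) : μ (symmDiff A B) = 0 := by
  have hmeq : μ A = μ B :=
    (ENNReal.toReal_eq_toReal_iff' (measure_ne_top μ A) (measure_ne_top μ B)).mp h
  rcases hsub with hsub | hsub
  · have h1 : A \ B = ∅ := by rw [Set.diff_eq_empty]; exact hsub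
    have h2 : μ (B \ A) = 0 := by
      rw [measure_diff hsub hA.nullMeasurableSet (measure_ne_top μ A), hmeq, tsub_self]
    rw [Set.symmDiff_def]
    refine measure_union_null ?_ h2
    simp [h1]
  · have h1 : B \ A = ∅ := by rw [Set.diff_eq_empty]; exact hsub
    have h2 : μ (A \ B) = 0 := by
      rw [measure_diff hsub hB.nullMeasurableSet (measure_ne_top μ B), hmeq.symm, tsub_self]
    rw [Set.symmDiff_def]
    refine measure_union_null h2 ?_
    simp [h1]

lemma key_int {Ω 𝒳 : Type*} [MeasurableSpace Ω] [MeasurableSpace 𝒳]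
    (μ : Measure Ω) [IsFiniteMeasure μ] (X : Ω → 𝒳) (hX : Measurable X)
    (A A' : Set Ω) (hA : MeasurableSet A) (hA' : MeasurableSet A')
    (c : ℝ) (hc : 0 ≤ c)
    (hP : ∀ B : Set 𝒳, MeasurableSet B → Pr μ (A ∩ X ⁻¹' B) = c * Pr μ (A' ∩ X ⁻¹' B))
    (h : 𝒳 → ℝ) (hh : Measurable h) :
    ∫ ω, h (X ω) * A.indicator 1 ω ∂μ = c * ∫ ω, h (X ω) * A'.indicator 1 ω ∂μ := by
  have hmap : Measure.map X (μ.restrict A) = ENNReal.ofReal c • Measure.map X (μ.restrict A') := by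
    ext B hB
    rw [Measure.map_apply hX hB, Measure.smul_apply, smul_eq_mul, Measure.map_apply hX hB,
      Measure.restrict_apply (hX hB), Measure.restrict_apply (hX hB)]
    have h1 := hP B hB
    have hfin : ENNReal.ofReal c * μ (A' ∩ X ⁻¹' B) ≠ ⊤ :=
      ENNReal.mul_ne_top ENNReal.ofReal_ne_top (measure_ne_top μ _)
    rw [Set.inter_comm (X ⁻¹' B) A, Set.inter_comm (X ⁻¹' B) A']
    refine (ENNReal.toReal_eq_toReal_iff' (measure_ne_top μ _) hfin).mp ?_
    rw [ENNReal.toReal_mul, ENNReal.toReal_ofReal hc]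
    exact h1
  have hrw : ∀ (T : Set Ω), MeasurableSet T →
      ∫ ω, h (X ω) * T.indicator 1 ω ∂μ = ∫ y, h y ∂(Measure.map X (μ.restrict T)) := by
    intro T hT
    rw [integral_map hX.aemeasurable hh.aestronglyMeasurable]
    rw [← integral_indicator hT]
    congr 1
    ext ω
    by_cases hω : ω ∈ T <;> simp [Set.indicator, hω]
  rw [hrw A hA, hrw A' hA', hmap, integral_smul_measure, ENNReal.toReal_ofReal hc, smul_eq_mul]

lemma intg_aux {Ω : Type*} [MeasurableSpace Ω] (μ : Measure Ω) [IsFiniteMeasure μ]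
    {T : Set Ω} (hT : MeasurableSet T) {h : Ω → ℝ} (hh : Measurable h)
    {C : ℝ} (hC : 0 ≤ C) (hb : ∀ x, |h x| ≤ C) :
    Integrable (fun ω => h ω * T.indicator 1 ω) μ := by
  refine (integrable_const C).mono' ((hh.mul (measurable_one.indicator hT)).aestronglyMeasurable) ?_
  refine Filter.Eventually.of_forall fun ω => ?_
  rw [Real.norm_eq_abs, abs_mul]
  by_cases hω : ω ∈ T <;> simp [Set.indicator, hω, hC]
  exact hb ω


lemma symm_aux {α : Type*} (S T U : Set α) :
    symmDiff (S ∩ Tᶜ) (S ∩ U) = symmDiff (S ∩ T) (S ∩ Uᶜ) := by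
  ext ω
  simp only [Set.symmDiff_def, Set.mem_union, Set.mem_diff, Set.mem_inter_iff,
    Set.mem_compl_iff, not_and, not_not]
  tauto

/-- Theorem 5: If g range-separates P = {y=1} and N = {y=0}, and the
noise-rate estimates are exact (so the pruning cutoffs k₁, k₀ remove exactly the mass of
the mislabeled examples), then for any classifier fθ and any bounded loss l, the expected
Rank-Pruning risk on the corrupted distribution equals the expected risk on the clean
distribution.  Labels are encoded as indicators: s = 1_S, y = 1_Y, and
P̃_conf = S ∩ {g(x) ≥ k₁}, Ñ_conf = Sᶜ ∩ {g(x) ≤ k₀}. -/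
theorem stmt19 {Ω 𝒳 : Type*} [MeasurableSpace Ω] [MeasurableSpace 𝒳]
    (μ : Measure Ω) [IsProbabilityMeasure μ]
    (Y S : Set Ω) (hY : MeasurableSet Y) (hS : MeasurableSet S)
    (X : Ω → 𝒳) (hX : Measurable X)
    (ρ₁ ρ₀ : ℝ) (hρ₁0 : 0 ≤ ρ₁) (hρ₀0 : 0 ≤ ρ₀) (hsum : ρ₁ + ρ₀ < 1)
    -- class-conditional noise: s ⊥ x given y, with flip rates ρ₁, ρ₀:
    (hnoise1 : ∀ B : Set 𝒳, MeasurableSet B →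
      Pr μ (S ∩ Y ∩ X ⁻¹' B) = (1 - ρ₁) * Pr μ (Y ∩ X ⁻¹' B))
    (hnoise0 : ∀ B : Set 𝒳, MeasurableSet B →
      Pr μ (S ∩ Yᶜ ∩ X ⁻¹' B) = ρ₀ * Pr μ (Yᶜ ∩ X ⁻¹' B))
    -- g range separates P and N:
    (g : 𝒳 → ℝ) (hgm : Measurable g) (z : ℝ)
    (hsepP : ∀ ω ∈ Y, z < g (X ω)) (hsepN : ∀ ω ∈ Yᶜ, g (X ω) < z)
    -- exact noise-rate estimates: the cutoffs prune exactly the mislabeled mass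
    -- π₁ P(s=1) = P(y=0, s=1) from {s=1} and π₀ P(s=0) = P(y=1, s=0) from {s=0}:
    (k₁ k₀ : ℝ)
    (hk₁ : Pr μ (S ∩ {ω | g (X ω) < k₁}) = Pr μ (S ∩ Yᶜ))
    (hk₀ : Pr μ (Sᶜ ∩ {ω | k₀ < g (X ω)}) = Pr μ (Sᶜ ∩ Y))
    -- any classifier and any bounded (measurable) loss:
    (fθ : 𝒳 → ℝ) (hf : Measurable fθ)
    (l : ℝ → ℝ → ℝ) (hl : Measurable fun p : ℝ × ℝ => l p.1 p.2)
    (C : ℝ) (hbound : ∀ a b, |l a b| ≤ C) :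
    ∫ ω, ((1 - ρ₁)⁻¹ * l (fθ (X ω)) (S.indicator 1 ω) *
            (S ∩ {ω' | k₁ ≤ g (X ω')}).indicator 1 ω
        + (1 - ρ₀)⁻¹ * l (fθ (X ω)) (S.indicator 1 ω) *
            (Sᶜ ∩ {ω' | g (X ω') ≤ k₀}).indicator 1 ω) ∂μ
      = ∫ ω, l (fθ (X ω)) (Y.indicator 1 ω) ∂μ := by
  have hc₁ : (0:ℝ) < 1 - ρ₁ := by linarith
  have hc₀ : (0:ℝ) < 1 - ρ₀ := by linarith
  have hC : 0 ≤ C := le_trans (abs_nonneg _) (hbound 0 0)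
  set h₁ : 𝒳 → ℝ := fun x => l (fθ x) 1 with hh₁def
  set h₀ : 𝒳 → ℝ := fun x => l (fθ x) 0 with hh₀def
  have hmeas1 : Measurable h₁ := hl.comp (hf.prodMk measurable_const)
  have hmeas0 : Measurable h₀ := hl.comp (hf.prodMk measurable_const)
  have hgX : Measurable fun ω => g (X ω) := hgm.comp hX
  have hmA1 : MeasurableSet (S ∩ {ω | k₁ ≤ g (X ω)}) :=
    hS.inter (measurableSet_le measurable_const hgX)
  have hmA0 : MeasurableSet (Sᶜ ∩ {ω | g (X ω) ≤ k₀}) :=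
    hS.compl.inter (measurableSet_le hgX measurable_const)
  -- a.e. equality of the pruned positive set with S ∩ Y
  have hnull1 : μ (symmDiff (S ∩ {ω | k₁ ≤ g (X ω)}) (S ∩ Y)) = 0 := by
    have hcompl : {ω | k₁ ≤ g (X ω)} = {ω | g (X ω) < k₁}ᶜ := by
      ext ω; simp [not_lt]
    have hseteq : symmDiff (S ∩ {ω | k₁ ≤ g (X ω)}) (S ∩ Y)
        = symmDiff (S ∩ {ω | g (X ω) < k₁}) (S ∩ Yᶜ) := by
      rw [hcompl]; exact symm_aux S _ Y
    rw [hseteq]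
    refine symmDiff_null_of_pr_eq μ
      (hS.inter (measurableSet_lt hgX measurable_const)) (hS.inter hY.compl) hk₁ ?_
    rcases le_or_gt k₁ z with hk | hk
    · left
      rintro ω ⟨hωS, hωg⟩
      refine ⟨hωS, fun hωY => ?_⟩
      exact absurd (hsepP ω hωY) (not_lt.mpr (le_of_lt (lt_of_lt_of_le hωg hk)))
    · right
      rintro ω ⟨hωS, hωY⟩
      exact ⟨hωS, lt_trans (hsepN ω hωY) hk⟩
  -- a.e. equality of the pruned negative set with Sᶜ ∩ Yᶜ
  have hnull0 : μ (symmDiff (Sᶜ ∩ {ω | g (X ω) ≤ k₀}) (Sᶜ ∩ Yᶜ)) = 0 := by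
    have hcompl : {ω | g (X ω) ≤ k₀} = {ω | k₀ < g (X ω)}ᶜ := by
      ext ω; simp [not_lt]
    have hseteq : symmDiff (Sᶜ ∩ {ω | g (X ω) ≤ k₀}) (Sᶜ ∩ Yᶜ)
        = symmDiff (Sᶜ ∩ {ω | k₀ < g (X ω)}) (Sᶜ ∩ Y) := by
      rw [hcompl]
      have := symm_aux Sᶜ {ω | k₀ < g (X ω)} Yᶜ
      rwa [compl_compl] at this
    rw [hseteq]
    refine symmDiff_null_of_pr_eq μ
      (hS.compl.inter (measurableSet_lt measurable_const hgX)) (hS.compl.inter hY) hk₀ ?_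
    rcases le_or_gt z k₀ with hk | hk
    · left
      rintro ω ⟨hωS, hωg⟩
      refine ⟨hωS, ?_⟩
      by_contra hωY
      exact absurd (hsepN ω hωY) (not_lt.mpr (le_of_lt (lt_of_le_of_lt hk hωg)))
    · right
      rintro ω ⟨hωS, hωY⟩
      exact ⟨hωS, lt_trans hk (hsepP ω hωY)⟩
  -- rewrite the LHS integrand a.e.
  have hae : ∀ᵐ ω ∂μ,
      ((1 - ρ₁)⁻¹ * l (fθ (X ω)) (S.indicator 1 ω) *
            (S ∩ {ω' | k₁ ≤ g (X ω')}).indicator 1 ω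
        + (1 - ρ₀)⁻¹ * l (fθ (X ω)) (S.indicator 1 ω) *
            (Sᶜ ∩ {ω' | g (X ω') ≤ k₀}).indicator 1 ω)
      = (1 - ρ₁)⁻¹ * (h₁ (X ω) * (S ∩ Y).indicator 1 ω)
        + (1 - ρ₀)⁻¹ * (h₀ (X ω) * (Sᶜ ∩ Yᶜ).indicator 1 ω) := by
    have hm1 := measure_eq_zero_iff_ae_notMem.mp hnull1
    have hm0 := measure_eq_zero_iff_ae_notMem.mp hnull0
    filter_upwards [hm1, hm0] with ω hω1 hω0
    have e1 : (S ∩ {ω' | k₁ ≤ g (X ω')}).indicator (1 : Ω → ℝ) ω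
        = (S ∩ Y).indicator 1 ω := by
      simp only [Set.mem_symmDiff, not_or, not_and, not_not] at hω1
      by_cases h : ω ∈ S ∩ {ω' | k₁ ≤ g (X ω')}
      · rw [Set.indicator_of_mem h, Set.indicator_of_mem (hω1.1 h)]
      · rw [Set.indicator_of_notMem h,
          Set.indicator_of_notMem (fun hmem => h (hω1.2 hmem))]
    have e0 : (Sᶜ ∩ {ω' | g (X ω') ≤ k₀}).indicator (1 : Ω → ℝ) ω
        = (Sᶜ ∩ Yᶜ).indicator 1 ω := by
      simp only [Set.mem_symmDiff, not_or, not_and, not_not] at hω0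
      by_cases h : ω ∈ Sᶜ ∩ {ω' | g (X ω') ≤ k₀}
      · rw [Set.indicator_of_mem h, Set.indicator_of_mem (hω0.1 h)]
      · rw [Set.indicator_of_notMem h,
          Set.indicator_of_notMem (fun hmem => h (hω0.2 hmem))]
    rw [e1, e0]
    by_cases hωS : ω ∈ S <;> by_cases hωY : ω ∈ Y <;>
      simp [Set.indicator, hωS, hωY, hh₁def, hh₀def]
  rw [integral_congr_ae hae]
  -- split and evaluate
  have int1 : Integrable (fun ω => h₁ (X ω) * (S ∩ Y).indicator 1 ω) μ :=
    intg_aux μ (hS.inter hY) (hmeas1.comp hX) hC (fun x => hbound _ _)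
  have int0 : Integrable (fun ω => h₀ (X ω) * (Sᶜ ∩ Yᶜ).indicator 1 ω) μ :=
    intg_aux μ (hS.compl.inter hY.compl) (hmeas0.comp hX) hC (fun x => hbound _ _)
  rw [integral_add (int1.const_mul _) (int0.const_mul _), integral_const_mul, integral_const_mul]
  -- positive part
  have key1 : ∫ ω, h₁ (X ω) * (S ∩ Y).indicator 1 ω ∂μ
      = (1 - ρ₁) * ∫ ω, h₁ (X ω) * Y.indicator 1 ω ∂μ :=
    key_int μ X hX (S ∩ Y) Y (hS.inter hY) hY (1 - ρ₁) (le_of_lt hc₁) hnoise1 h₁ hmeas1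
  -- negative part: derive the complementary noise identity
  have hnoise0' : ∀ B : Set 𝒳, MeasurableSet B →
      Pr μ ((Sᶜ ∩ Yᶜ) ∩ X ⁻¹' B) = (1 - ρ₀) * Pr μ (Yᶜ ∩ X ⁻¹' B) := by
    intro B hB
    have e1 : Yᶜ ∩ X ⁻¹' B ∩ S = S ∩ Yᶜ ∩ X ⁻¹' B := by
      ext ω
      simp only [Set.mem_inter_iff, Set.mem_compl_iff, Set.mem_preimage]
      tauto
    have e2 : (Yᶜ ∩ X ⁻¹' B) \ S = (Sᶜ ∩ Yᶜ) ∩ X ⁻¹' B := by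
      ext ω
      simp only [Set.mem_diff, Set.mem_inter_iff, Set.mem_compl_iff, Set.mem_preimage]
      tauto
    have hmeq : μ (S ∩ Yᶜ ∩ X ⁻¹' B) + μ ((Sᶜ ∩ Yᶜ) ∩ X ⁻¹' B) = μ (Yᶜ ∩ X ⁻¹' B) := by
      rw [← e1, ← e2, measure_inter_add_diff _ hS]
    have htR := congrArg ENNReal.toReal hmeq
    rw [ENNReal.toReal_add (measure_ne_top μ _) (measure_ne_top μ _)] at htR
    have h0 := hnoise0 B hB
    unfold Pr at *
    linarith
  have key0 : ∫ ω, h₀ (X ω) * (Sᶜ ∩ Yᶜ).indicator 1 ω ∂μ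
      = (1 - ρ₀) * ∫ ω, h₀ (X ω) * Yᶜ.indicator 1 ω ∂μ :=
    key_int μ X hX (Sᶜ ∩ Yᶜ) Yᶜ (hS.compl.inter hY.compl) hY.compl (1 - ρ₀)
      (le_of_lt hc₀) hnoise0' h₀ hmeas0
  rw [key1, key0, ← mul_assoc, ← mul_assoc, inv_mul_cancel₀ (ne_of_gt hc₁),
    inv_mul_cancel₀ (ne_of_gt hc₀), one_mul, one_mul]
  -- combine into the clean risk
  have intY : Integrable (fun ω => h₁ (X ω) * Y.indicator 1 ω) μ :=
    intg_aux μ hY (hmeas1.comp hX) hC (fun x => hbound _ _)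
  have intYc : Integrable (fun ω => h₀ (X ω) * Yᶜ.indicator 1 ω) μ :=
    intg_aux μ hY.compl (hmeas0.comp hX) hC (fun x => hbound _ _)
  rw [← integral_add intY intYc]
  refine integral_congr_ae (Filter.Eventually.of_forall fun ω => ?_)
  by_cases hωY : ω ∈ Y <;> simp [Set.indicator, hωY, hh₁def, hh₀def]
end
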